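/- arXiv:1010.2902 — 2 statements merged into one kernel-verified Lean document; each statement's English description precedes it below -/
import Mathlib

section
/- For each n ≥ 1, the number of spanning trees (complexity) of the Schreier graph Γ_n of the Grigorchuk group is τ(Γ_n) = 2^{2^{n−1} − 1}. -/
/-- A finite multigraph on a vertex set `V`: a finite edge type together with an
incidence map assigning to each edge its unordered pair of endpoints
(loops and parallel edges are allowed). -/
structure Multigraph (V : Type) where
  /-- the type of edges -/
  Edge : Type
  /-- the edge type is finite -/
  fintypeEdge : Fintype Edge
  /-- equality of edges is decidable -/
  decEqEdge : DecidableEq Edge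
  /-- the unordered pair of endpoints of an edge -/
  inc : Edge → Sym2 V

attribute [instance] Multigraph.fintypeEdge Multigraph.decEqEdge

namespace Multigraph

variable {V : Type} [Fintype V] [DecidableEq V]

/-- The simple graph underlying the spanning subgraph of `G` with edge set `A`:
two distinct vertices are adjacent iff some edge in `A` has them as endpoints. -/
def toSimple (G : Multigraph V) (A : Finset G.Edge) : SimpleGraph V :=
  SimpleGraph.fromRel fun u v => ∃ e ∈ A, G.inc e = s(u, v)

/-- `G.comps A` is the number `k(A)` of connected components of the spanning
subgraph of `G` with edge set `A`. -/
noncomputable def comps (G : Multigraph V) (A : Finset G.Edge) : ℕ :=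
  Nat.card (G.toSimple A).ConnectedComponent

/-- The rank `r(A) = |V| - k(A)` of the spanning subgraph with edge set `A`. -/
noncomputable def rk (G : Multigraph V) (A : Finset G.Edge) : ℕ :=
  Fintype.card V - G.comps A

/-- The nullity `n(A) = |E(A)| - r(A)` of the spanning subgraph with edge set `A`. -/
noncomputable def nullity (G : Multigraph V) (A : Finset G.Edge) : ℕ :=
  A.card - G.rk A

/-- The Tutte polynomial
`T(G; x, y) = ∑_{A ⊆ E} (x - 1) ^ (r(E) - r(A)) * (y - 1) ^ n(A)`,
as a function of two real variables. -/
noncomputable def tutte (G : Multigraph V) (x y : ℝ) : ℝ :=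
  ∑ A ∈ (Finset.univ : Finset G.Edge).powerset,
    (x - 1) ^ (G.rk Finset.univ - G.rk A) * (y - 1) ^ (G.nullity A)

/-- The reliability polynomial `R(G, p)`: the probability that, when each edge is
independently active with probability `p`, every pair of vertices is joined by a
path of active edges (i.e. the spanning subgraph of active edges is connected). -/
noncomputable def reliability (G : Multigraph V) (p : ℝ) : ℝ :=
  ∑ A ∈ (Finset.univ : Finset G.Edge).powerset,
    if G.comps A = 1 then p ^ A.card * (1 - p) ^ (Fintype.card G.Edge - A.card) else 0

/-- The complexity `τ(G)`: the number of spanning subtrees of `G`, i.e. spanning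
subgraphs which are connected and have `|V| - 1` edges. -/
noncomputable def treeCount (G : Multigraph V) : ℕ :=
  Nat.card {A : Finset G.Edge // G.comps A = 1 ∧ A.card + 1 = Fintype.card V}

/-- The number of connected spanning subgraphs of `G`. -/
noncomputable def connCount (G : Multigraph V) : ℕ :=
  Nat.card {A : Finset G.Edge // G.comps A = 1}

/-- The number of spanning forests of `G`: spanning subgraphs containing no cycle,
i.e. with `|E(A)| = |V| - k(A)` (zero nullity). -/
noncomputable def forestCount (G : Multigraph V) : ℕ :=
  Nat.card {A : Finset G.Edge // A.card + G.comps A = Fintype.card V}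

/-- `σ` is an orientation of `G` if it assigns to every edge an ordered pair of
vertices whose underlying unordered pair is the pair of endpoints of the edge. -/
def IsOrientation (G : Multigraph V) (σ : G.Edge → V × V) : Prop :=
  ∀ e, s((σ e).1, (σ e).2) = G.inc e

/-- The number of acyclic orientations of `G`: orientations admitting no directed
cycle. -/
noncomputable def acyclicOrientationCount (G : Multigraph V) : ℕ :=
  Nat.card {σ : G.Edge → V × V //
    G.IsOrientation σ ∧ ∀ v : V, ¬ Relation.TransGen (fun u w => ∃ e, σ e = (u, w)) v v}

/-- A proper coloring of `G`: the two endpoints of every edge receive distinct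
colors. -/
def ProperColoring (G : Multigraph V) {α : Type} (c : V → α) : Prop :=
  ∀ e, ¬ (Sym2.map c (G.inc e)).IsDiag

/-- The number of proper colorings of `G` with `k` colors (the value `χ(G, k)` of
the chromatic polynomial at the natural number `k`). -/
noncomputable def chromCount (G : Multigraph V) (k : ℕ) : ℕ :=
  Nat.card {c : V → Fin k // G.ProperColoring c}

end Multigraph

/-- The left endpoint of the `i`-th gap of a path on `2^n` vertices. -/
def leftV (n : ℕ) (i : Fin (2 ^ n - 1)) : Fin (2 ^ n) :=
  ⟨i.val, by have := i.isLt; omega⟩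

/-- The right endpoint of the `i`-th gap of a path on `2^n` vertices. -/
def rightV (n : ℕ) (i : Fin (2 ^ n - 1)) : Fin (2 ^ n) :=
  ⟨i.val + 1, by have := i.isLt; omega⟩

/-- The vertex carrying the `j`-th extra loop: the two outermost vertices carry
two extra loops each. -/
def endV (n : ℕ) (j : Fin 4) : Fin (2 ^ n) :=
  if j.val < 2 then ⟨0, by positivity⟩
  else
    ⟨2 ^ n - 1, by
      have h : 0 < 2 ^ n := by positivity
      omega⟩

/-- The level-`n` Schreier graph `Γ_n` of the Grigorchuk group, as an unlabelled
multigraph: the path-shaped cactus on `2^n` vertices obtained by alternating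
`2^(n-1)` bridges (single edges, at even gaps) and `2^(n-1) - 1` cycles of length
two (double edges, at odd gaps), with one loop at every vertex and two extra loops
at each of the two outermost vertices (which therefore carry three loops each). -/
def grig (n : ℕ) : Multigraph (Fin (2 ^ n)) where
  Edge := (Σ i : Fin (2 ^ n - 1), Fin (if Even i.val then 1 else 2)) ⊕ (Fin (2 ^ n) ⊕ Fin 4)
  fintypeEdge := inferInstance
  decEqEdge := inferInstance
  inc := fun e =>
    match e with
    | Sum.inl ⟨i, _⟩ => s(leftV n i, rightV n i)
    | Sum.inr (Sum.inl v) => s(v, v)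
    | Sum.inr (Sum.inr j) => s(endV n j, endV n j)

/-!
Apart from loops, every edge of `Γ_n` joins two consecutive vertices `i, i + 1` of a path on
`2^n` vertices. Loops do not affect connectivity, so a spanning subgraph is connected iff it
contains an edge at each of the `2^n - 1` gaps. A spanning tree has exactly `2^n - 1` edges, so
it takes exactly one edge per gap and no loop: there is one choice at each of the `2^(n-1)`
bridges and two at each of the `2^(n-1) - 1` double edges.
-/

open Finset

theorem SimpleGraph.card_connectedComponent_eq_one_iff {V : Type*} {G : SimpleGraph V} :
    Nat.card G.ConnectedComponent = 1 ↔ G.Connected := by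
  rw [Nat.card_eq_one_iff_unique, G.connected_iff]
  refine and_congr ⟨fun _ u v => ?_, Preconnected.subsingleton_connectedComponent⟩
    ⟨fun ⟨c⟩ => ⟨c.out⟩, fun ⟨v⟩ => ⟨G.connectedComponentMk v⟩⟩
  exact ConnectedComponent.exact (Subsingleton.elim _ _)

theorem SimpleGraph.Reachable.eq_of_forall_adj {V β : Type*} {G : SimpleGraph V} {f : V → β}
    (hf : ∀ u v, G.Adj u v → f u = f v) {u v : V} (h : G.Reachable u v) : f u = f v := by
  rw [reachable_iff_reflTransGen] at h
  induction h with
  | refl => rfl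
  | tail _ hadj ih => exact ih.trans (hf _ _ hadj)

/-- Without the edge between `i` and `i + 1`, no walk leaves `{v ≤ i}`. -/
theorem SimpleGraph.connected_iff_forall_adj_of_le_pathGraph {N : ℕ} {G : SimpleGraph (Fin N)}
    (hG : G ≤ pathGraph N) (hN : 0 < N) :
    G.Connected ↔ ∀ (i : ℕ) (hi : i + 1 < N), G.Adj ⟨i, by omega⟩ ⟨i + 1, hi⟩ := by
  constructor
  · intro hconn i hi
    by_contra hgap
    have hcut : ∀ u v : Fin N, G.Adj u v → (u.val ≤ i ↔ v.val ≤ i) := by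
      rintro ⟨u, hu⟩ ⟨v, hv⟩ huv
      rcases pathGraph_adj.mp (hG huv) with rfl | rfl
      · rcases eq_or_ne u i with rfl | hui
        exacts [absurd huv hgap, by simp only; omega]
      · rcases eq_or_ne v i with rfl | hvi
        exacts [absurd huv.symm hgap, by simp only; omega]
    have := (hconn.preconnected ⟨0, hN⟩ ⟨N - 1, by omega⟩).eq_of_forall_adj
      (f := fun v : Fin N => v.val ≤ i) fun u v huv => propext (hcut u v huv)
    simp only [eq_iff_iff] at this
    omega
  · intro hadj
    have hreach : ∀ (m : ℕ) (hm : m < N), G.Reachable ⟨0, hN⟩ ⟨m, hm⟩ := by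
      intro m
      induction m with
      | zero => exact fun _ => Reachable.rfl
      | succ m ih => exact fun hm => (ih (by omega)).trans (hadj m hm).reachable
    exact G.connected_iff_exists_forall_reachable.mpr ⟨⟨0, hN⟩, fun v => hreach v.val v.isLt⟩

theorem Multigraph.comps_eq_one_iff {V : Type} [Fintype V] [DecidableEq V] (G : Multigraph V)
    (A : Finset G.Edge) : G.comps A = 1 ↔ (G.toSimple A).Connected :=
  SimpleGraph.card_connectedComponent_eq_one_iff

theorem Multigraph.toSimple_adj {V : Type} [Fintype V] [DecidableEq V] {G : Multigraph V}
    {A : Finset G.Edge} {u v : V} :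
    (G.toSimple A).Adj u v ↔ u ≠ v ∧ ∃ e ∈ A, G.inc e = s(u, v) := by
  rw [Multigraph.toSimple, SimpleGraph.fromRel_adj]
  refine and_congr_right fun _ => ⟨?_, Or.inl⟩
  rintro (h | ⟨e, he, hinc⟩)
  exacts [h, ⟨e, he, hinc.trans Sym2.eq_swap⟩]

/-- Such a set has one element in each fiber `{Sum.inl ⟨i, _⟩}` and no other elements, so it is
the image of a section of `β`. -/
theorem card_finset_meeting_every_fiber {ι γ : Type*} [Fintype ι] {β : ι → Type*}
    [∀ i, Fintype (β i)] :
    Nat.card {A : Finset ((Σ i, β i) ⊕ γ) //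
        (∀ i, ∃ b, Sum.inl ⟨i, b⟩ ∈ A) ∧ A.card = Fintype.card ι} =
      ∏ i, Fintype.card (β i) := by
  let edges (f : ∀ i, β i) : Finset ((Σ i, β i) ⊕ γ) :=
    univ.map ⟨fun i => Sum.inl ⟨i, f i⟩, fun i j h => congrArg Sigma.fst (Sum.inl.inj h)⟩
  have card_edges (f) : (edges f).card = Fintype.card ι := by simp [edges]
  have mem_edges {f i b} : Sum.inl ⟨i, b⟩ ∈ edges f ↔ f i = b := by
    simp only [edges, mem_map, mem_univ, true_and]
    refine ⟨fun ⟨_, h⟩ => ?_, fun h => ⟨i, h ▸ rfl⟩⟩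
    obtain ⟨rfl, h⟩ := Sigma.mk.inj_iff.1 (Sum.inl.inj h)
    exact eq_of_heq h
  calc _ = Nat.card (∀ i, β i) := (Nat.card_eq_of_bijective
        (fun f => ⟨edges f, fun i => ⟨f i, mem_edges.2 rfl⟩, card_edges f⟩) ⟨?_, ?_⟩).symm
    _ = _ := by simp [Nat.card_pi]
  · intro f g hfg
    funext i
    have hfg : edges f = edges g := congrArg Subtype.val hfg
    exact (mem_edges.1 (hfg ▸ mem_edges.2 rfl)).symm
  · rintro ⟨A, hA⟩
    obtain ⟨hcov, hcard⟩ := id hA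
    choose f hf using hcov
    refine ⟨f, Subtype.ext (eq_of_subset_of_card_le ?_ (by rw [hcard, card_edges]))⟩
    intro e he
    obtain ⟨i, -, rfl⟩ := mem_map.1 he
    exact hf i

theorem prod_range_ite_even {M : Type*} [CommMonoid M] (a : M) (m : ℕ) :
    ∏ i ∈ range m, (if Even i then 1 else a) = a ^ (m / 2) := by
  induction m with
  | zero => simp
  | succ m ih =>
    rw [prod_range_succ, ih]
    rcases Nat.even_or_odd m with hm | hm
    · rw [if_pos hm, mul_one]
      have := Nat.even_iff.1 hm
      congr 1
      omega
    · rw [if_neg (Nat.not_even_iff_odd.2 hm), ← pow_succ]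
      have := Nat.odd_iff.1 hm
      congr 1
      omega

section grig

variable {n : ℕ} {A : Finset (grig n).Edge}

theorem leftV_ne_rightV (i : Fin (2 ^ n - 1)) : leftV n i ≠ rightV n i := by
  simp [leftV, rightV, Fin.ext_iff]

theorem grig_toSimple_adj {u v : Fin (2 ^ n)} :
    ((grig n).toSimple A).Adj u v ↔
      ∃ i k, Sum.inl ⟨i, k⟩ ∈ A ∧ s(leftV n i, rightV n i) = s(u, v) := by
  rw [Multigraph.toSimple_adj]
  constructor
  · rintro ⟨huv, ⟨i, k⟩ | w | j, he, hinc⟩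
    · exact ⟨i, k, he, hinc⟩
    all_goals exact absurd (Sym2.mk_isDiag_iff.1 (hinc ▸ Sym2.mk_isDiag_iff.2 rfl)) huv
  · rintro ⟨i, k, he, hinc⟩
    refine ⟨fun huv => ?_, _, he, hinc⟩
    subst huv
    exact leftV_ne_rightV i (Sym2.mk_isDiag_iff.1 (hinc ▸ Sym2.mk_isDiag_iff.2 rfl))

theorem grig_toSimple_le_pathGraph : (grig n).toSimple A ≤ SimpleGraph.pathGraph (2 ^ n) := by
  intro u v huv
  obtain ⟨i, -, -, hinc⟩ := grig_toSimple_adj.1 huv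
  rw [SimpleGraph.pathGraph_adj]
  rcases Sym2.eq_iff.1 hinc with ⟨rfl, rfl⟩ | ⟨rfl, rfl⟩
  exacts [Or.inl rfl, Or.inr rfl]

theorem grig_toSimple_adj_leftV_rightV (i : Fin (2 ^ n - 1)) :
    ((grig n).toSimple A).Adj (leftV n i) (rightV n i) ↔ ∃ k, Sum.inl ⟨i, k⟩ ∈ A := by
  refine ⟨fun h => ?_, fun ⟨k, he⟩ => grig_toSimple_adj.2 ⟨i, k, he, rfl⟩⟩
  obtain ⟨j, k, he, hinc⟩ := grig_toSimple_adj.1 h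
  obtain rfl : j = i := by
    rcases Sym2.eq_iff.1 hinc with ⟨h, -⟩ | ⟨h₁, h₂⟩
    · exact Fin.ext (congrArg Fin.val h :)
    · have := congrArg Fin.val h₁
      have := congrArg Fin.val h₂
      simp only [leftV, rightV] at *
      omega
  exact ⟨k, he⟩

theorem grig_comps_eq_one_iff :
    (grig n).comps A = 1 ↔ ∀ i : Fin (2 ^ n - 1), ∃ k, Sum.inl ⟨i, k⟩ ∈ A := by
  rw [Multigraph.comps_eq_one_iff, SimpleGraph.connected_iff_forall_adj_of_le_pathGraph
    grig_toSimple_le_pathGraph (by positivity)]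
  exact ⟨fun h i => (grig_toSimple_adj_leftV_rightV i).1 (h i (by omega)),
    fun h i hi => (grig_toSimple_adj_leftV_rightV ⟨i, by omega⟩).2 (h _)⟩

end grig

theorem treeCount_grig_general (n : ℕ) :
    (grig n).treeCount = 2 ^ (2 ^ (n - 1) - 1) := by
  have hcard (A : Finset (grig n).Edge) :
      A.card + 1 = Fintype.card (Fin (2 ^ n)) ↔ A.card = Fintype.card (Fin (2 ^ n - 1)) := by
    simp only [Fintype.card_fin]
    have := Nat.one_le_two_pow (n := n)
    omega
  have hhalf : (2 ^ n - 1) / 2 = 2 ^ (n - 1) - 1 := by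
    rcases n with _ | n
    · rfl
    · rw [Nat.add_sub_cancel, pow_succ]
      omega
  calc (grig n).treeCount
      = Nat.card {A : Finset (grig n).Edge //
          (∀ i, ∃ k, Sum.inl ⟨i, k⟩ ∈ A) ∧ A.card = Fintype.card (Fin (2 ^ n - 1))} :=
        Nat.card_congr (Equiv.subtypeEquivRight fun A => and_congr grig_comps_eq_one_iff (hcard A))
    _ = ∏ i : Fin (2 ^ n - 1), Fintype.card (Fin (if Even i.val then 1 else 2)) :=
        card_finset_meeting_every_fiber
    _ = 2 ^ (2 ^ (n - 1) - 1) := by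
        simp only [Fintype.card_fin]
        rw [Fin.prod_univ_eq_prod_range (fun i => if Even i then 1 else 2), prod_range_ite_even,
          hhalf]

/-- For each `n ≥ 1`, the number of spanning trees (complexity)
of the Schreier graph `Γ_n` of the Grigorchuk group is `τ(Γ_n) = 2^(2^(n-1) - 1)`. -/
theorem treeCount_grig (n : ℕ) (hn : 1 ≤ n) :
    (grig n).treeCount = 2 ^ (2 ^ (n - 1) - 1) :=
  treeCount_grig_general n
end

section
/- For each n ≥ 1 and all real β, J with βJ ≠ 0, one has 2(e^{2βJ} − 1)^{2^n − 1} · e^{−βJ(3·2^{n−1} − 2)} · T_n*((e^{2βJ}+1)/(e^{2βJ}−1), e^{2βJ}) = 2^{2^n} cosh(βJ)^{3·2^{n−1} − 2} (1 + tanh^2(βJ))^{2^{n−1} − 1}, where T_n*(x,y) = x^{2^{n−1}} (y+x)^{2^{n−1}−1} is the Tutte polynomial of the loopless Schreier graph Γ_n* of the Grigorchuk group; the right-hand side is the partition function Z_n of the Ising model on Γ_n*. -/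
/-- The loopless level-`n` Schreier graph `Γ_n*` of the Grigorchuk group: `Γ_n`
with all loops deleted, i.e. the path-shaped cactus on `2^n` vertices alternating
`2^(n-1)` bridges and `2^(n-1) - 1` cycles of length two. -/
def grigStar (n : ℕ) : Multigraph (Fin (2 ^ n)) where
  Edge := Σ i : Fin (2 ^ n - 1), Fin (if Even i.val then 1 else 2)
  fintypeEdge := inferInstance
  decEqEdge := inferInstance
  inc := fun e => s(leftV n e.1, rightV n e.1)

/-! `Γ_n*` is a path whose `2 ^ n - 1` consecutive gaps are alternately a bridge and a pair of
parallel edges. A spanning subgraph joins two vertices iff it contains an edge in every gap between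
them, so its rank is the number of gaps it meets and the subgraph expansion of the Tutte
polynomial factors over the gaps: `x` for a bridge and `x + y` for a double edge. At
`x = (e^{2t} + 1) / (e^{2t} - 1)`, `y = e^{2t}` a bridge then contributes
`(e^{2t} - 1) e^{-t} x = 2 cosh t` and a double edge
`(e^{2t} - 1) e^{-2t} (x + y) = 2 cosh (2t) = 2 cosh² t (1 + tanh² t)`. -/

open Finset

lemma SimpleGraph.card_connectedComponent_eq_card_range {V α : Type*} (G : SimpleGraph V)
    (f : V → α) (hf : ∀ u v, G.Reachable u v ↔ f u = f v) :
    Nat.card G.ConnectedComponent = Nat.card (Set.range f) :=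
  Nat.card_congr ((Quot.congrRight hf).trans (Setoid.quotientKerEquivRange f))

def Finset.sigmaEquivPi {ι : Type*} [Fintype ι] [DecidableEq ι] {κ : ι → Type*}
    [∀ i, Fintype (κ i)] [∀ i, DecidableEq (κ i)] :
    ((i : ι) → Finset (κ i)) ≃ Finset (Σ i, κ i) where
  toFun f := univ.sigma f
  invFun A i := {j | ⟨i, j⟩ ∈ A}
  left_inv f := by ext; simp
  right_inv A := by ext; simp

lemma Finset.prod_range_two_mul_add_one_ite_even {M : Type*} [CommMonoid M] (a b : M) (k : ℕ) :
    ∏ i ∈ range (2 * k + 1), (if Even i then a else b) = a ^ (k + 1) * b ^ k := by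
  induction k with
  | zero => simp
  | succ k ih =>
    have hodd : ¬Even (2 * k + 1) := by simp [parity_simps]
    have heven : Even (2 * k + 1 + 1) := by simp [parity_simps]
    rw [show 2 * (k + 1) + 1 = 2 * k + 1 + 1 + 1 by ring, prod_range_succ, prod_range_succ, ih,
      if_neg hodd, if_pos heven]
    simp only [pow_succ]
    ac_rfl

section AbsentBelow

variable (S : Finset ℕ)

def absentBelow (j : ℕ) : ℕ := #{i ∈ range j | i ∉ S}

lemma absentBelow_succ (j : ℕ) :
    absentBelow S (j + 1) = absentBelow S j + if j ∈ S then 0 else 1 := by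
  by_cases h : j ∈ S <;> simp [absentBelow, range_add_one, filter_insert, h]

lemma absentBelow_add_card_filter_Ico {u v : ℕ} (huv : u ≤ v) :
    absentBelow S u + #{i ∈ Ico u v | i ∉ S} = absentBelow S v := by
  simp only [absentBelow, card_filter]
  exact sum_range_add_sum_Ico _ huv

lemma absentBelow_eq_iff {u v : ℕ} (huv : u ≤ v) :
    absentBelow S u = absentBelow S v ↔ Ico u v ⊆ S := by
  rw [← absentBelow_add_card_filter_Ico S huv, left_eq_add, card_eq_zero, filter_eq_empty_iff]
  exact ⟨fun h i hi => not_not.1 (h hi), fun h i hi => not_not.2 (h hi)⟩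

lemma absentBelow_mono : Monotone (absentBelow S) := fun _ _ huv =>
  absentBelow_add_card_filter_Ico S huv ▸ Nat.le_add_right _ _

lemma absentBelow_of_subset_range {M : ℕ} (h : S ⊆ range M) : absentBelow S M = M - #S := by
  rw [absentBelow, filter_not, filter_mem_eq_inter, inter_eq_right.2 h,
    card_sdiff_of_subset h, card_range]

lemma exists_absentBelow_eq {m t : ℕ} (hm : m ≤ absentBelow S t) :
    ∃ j ≤ t, absentBelow S j = m := by
  induction t with
  | zero =>
    refine ⟨0, le_rfl, ?_⟩
    simp only [absentBelow, range_zero, filter_empty, card_empty] at hm ⊢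
    omega
  | succ t ih =>
    by_cases h : m ≤ absentBelow S t
    · obtain ⟨j, hj, hjm⟩ := ih h
      exact ⟨j, hj.trans t.le_succ, hjm⟩
    · refine ⟨t + 1, le_rfl, ?_⟩
      rw [absentBelow_succ] at hm ⊢
      split_ifs at hm ⊢ <;> omega

end AbsentBelow

/-- For `c ≠ 0`, the Tutte polynomial `x + y + ⋯ + y ^ (c - 1)` of the bond with `c` parallel
edges, written as its subgraph expansion. -/
noncomputable def bondTutte (c : ℕ) (x y : ℝ) : ℝ :=
  ∑ B : Finset (Fin c), if B = ∅ then x - 1 else (y - 1) ^ (#B - 1)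

lemma bondTutte_one (x y : ℝ) : bondTutte 1 x y = x := by
  rw [bondTutte, show (univ : Finset (Finset (Fin 1))) = {∅, {0}} by decide,
    sum_pair (by decide)]
  simp

lemma bondTutte_two (x y : ℝ) : bondTutte 2 x y = x + y := by
  rw [bondTutte, show (univ : Finset (Finset (Fin 2))) = {∅, {0}, {1}, {0, 1}} by decide,
    sum_insert (by decide), sum_insert (by decide), sum_insert (by decide), sum_singleton]
  norm_num
  ring

namespace Multigraph

/-- An `abbrev`, so that `(path N c).Edge` unfolds to the sigma type during instance search and
rewriting. -/
abbrev path (N : ℕ) (c : Fin (N - 1) → ℕ) : Multigraph (Fin N) where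
  Edge := Σ i : Fin (N - 1), Fin (c i)
  fintypeEdge := inferInstance
  decEqEdge := inferInstance
  inc e := s(⟨e.1, by omega⟩, ⟨e.1 + 1, by omega⟩)

namespace path

variable {N : ℕ} {c : Fin (N - 1) → ℕ} (A : Finset (path N c).Edge)

def gaps : Finset ℕ := A.image fun e => (e.1 : ℕ)

lemma gaps_subset_range : gaps A ⊆ range (N - 1) := by
  intro i hi
  obtain ⟨e, -, rfl⟩ := mem_image.1 hi
  exact mem_range.2 e.1.isLt

lemma absentBelow_gaps_eq_of_adj {u v : Fin N} (h : ((path N c).toSimple A).Adj u v) :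
    absentBelow (gaps A) u = absentBelow (gaps A) v := by
  obtain ⟨-, ⟨e, he, hinc⟩ | ⟨e, he, hinc⟩⟩ := h <;>
  · have hmem : (e.1 : ℕ) ∈ gaps A :=
      mem_image_of_mem (fun e : (path N c).Edge => (e.1 : ℕ)) he
    have hstep : absentBelow (gaps A) (e.1 + 1) = absentBelow (gaps A) e.1 := by
      rw [absentBelow_succ, if_pos hmem, add_zero]
    simp only [Sym2.eq_iff, Fin.ext_iff] at hinc
    rcases hinc with ⟨h1, h2⟩ | ⟨h1, h2⟩ <;> simp only [← h1, ← h2, hstep]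

lemma adj_of_mem_gaps {u v : Fin N} (hv : (v : ℕ) = u + 1) (hu : (u : ℕ) ∈ gaps A) :
    ((path N c).toSimple A).Adj u v := by
  obtain ⟨e, he, heu⟩ := mem_image.1 hu
  refine ⟨fun huv => by simp [huv] at hv, Or.inl ⟨e, he, ?_⟩⟩
  simp only [Sym2.eq_iff, Fin.ext_iff]
  omega

lemma reachable_of_Ico_subset_gaps {u v : Fin N} (huv : u ≤ v) (h : Ico (u : ℕ) v ⊆ gaps A) :
    ((path N c).toSimple A).Reachable u v := by
  obtain ⟨v, hv⟩ := v
  induction v, (show (u : ℕ) ≤ v from huv) using Nat.le_induction with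
  | base => rfl
  | succ w huw ih =>
    have hw : w < N := by omega
    refine (ih hw huw fun i hi => h (Ico_subset_Ico_right w.le_succ hi)).trans
      (adj_of_mem_gaps A (v := ⟨w + 1, hv⟩) (u := ⟨w, hw⟩) rfl ?_).reachable
    exact h (mem_Ico.2 ⟨huw, w.lt_succ_self⟩)

lemma reachable_iff_absentBelow_eq (u v : Fin N) :
    ((path N c).toSimple A).Reachable u v ↔ absentBelow (gaps A) u = absentBelow (gaps A) v := by
  refine ⟨fun h => ?_, fun h => ?_⟩
  · obtain ⟨p⟩ := h
    induction p with
    | nil => rfl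
    | cons had _ ih => exact (absentBelow_gaps_eq_of_adj A had).trans ih
  · rcases le_total u v with huv | hvu
    · exact reachable_of_Ico_subset_gaps A huv ((absentBelow_eq_iff _ huv).1 h)
    · exact (reachable_of_Ico_subset_gaps A hvu ((absentBelow_eq_iff _ hvu).1 h.symm)).symm

lemma range_absentBelow_gaps :
    Set.range (fun v : Fin N => absentBelow (gaps A) v) = range (N - #(gaps A)) := by
  have htop := absentBelow_of_subset_range _ (gaps_subset_range A)
  have hcard : #(gaps A) ≤ N - 1 := by simpa using card_le_card (gaps_subset_range A)
  ext m
  simp only [Set.mem_range, coe_range, Set.mem_Iio]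
  constructor
  · rintro ⟨v, rfl⟩
    have := v.isLt
    have := absentBelow_mono (gaps A) (show (v : ℕ) ≤ N - 1 by omega)
    omega
  · intro hm
    obtain ⟨j, hj, rfl⟩ := exists_absentBelow_eq (gaps A) (m := m) (t := N - 1) (by omega)
    exact ⟨⟨j, by omega⟩, rfl⟩

lemma comps_eq : (path N c).comps A = N - #(gaps A) := by
  rw [comps, SimpleGraph.card_connectedComponent_eq_card_range _ _ (reachable_iff_absentBelow_eq A),
    range_absentBelow_gaps, Nat.card_coe_set_eq, Set.ncard_coe_finset, card_range]

lemma rk_eq : (path N c).rk A = #(gaps A) := by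
  have := card_le_card (gaps_subset_range A)
  rw [card_range] at this
  rw [rk, comps_eq, Fintype.card_fin]
  omega

lemma card_gaps_sigma (f : (i : Fin (N - 1)) → Finset (Fin (c i))) :
    #(gaps (univ.sigma f : Finset (path N c).Edge)) = #{i | f i ≠ ∅} := by
  have : gaps (univ.sigma f : Finset (path N c).Edge) =
      (univ.filter fun i => f i ≠ ∅).map Fin.valEmbedding := by
    ext m
    rw [gaps, mem_image]
    simp only [mem_map, mem_filter, mem_univ, true_and, Fin.valEmbedding_apply]
    constructor
    · rintro ⟨⟨i, j⟩, hij, rfl⟩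
      exact ⟨i, ne_empty_of_mem (mem_sigma.1 hij).2, rfl⟩
    · rintro ⟨i, hi, rfl⟩
      obtain ⟨j, hj⟩ := nonempty_iff_ne_empty.2 hi
      exact ⟨⟨i, j⟩, mem_sigma.2 ⟨mem_univ _, hj⟩, rfl⟩
  rw [this, card_map]

lemma rk_univ (hc : ∀ i, c i ≠ 0) : (path N c).rk univ = N - 1 := by
  have huniv : (univ : Finset (path N c).Edge) = univ.sigma fun _ => univ := univ_sigma_univ.symm
  rw [huniv, rk_eq, card_gaps_sigma, filter_true_of_mem, card_univ, Fintype.card_fin]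
  intro i _
  exact (@univ_nonempty _ _ ⟨⟨0, Nat.pos_of_ne_zero (hc i)⟩⟩).ne_empty

lemma tutte_summand_sigma (hc : ∀ i, c i ≠ 0) (x y : ℝ)
    (f : (i : Fin (N - 1)) → Finset (Fin (c i))) :
    (x - 1) ^ ((path N c).rk univ - (path N c).rk (univ.sigma f)) *
        (y - 1) ^ (path N c).nullity (univ.sigma f) =
      ∏ i, if f i = ∅ then x - 1 else (y - 1) ^ (#(f i) - 1) := by
  have hcompl : #{i | f i = ∅} = N - 1 - #{i | f i ≠ ∅} := by
    have := card_filter_add_card_filter_not (s := univ) fun i => f i = ∅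
    rw [card_univ, Fintype.card_fin] at this
    simp only [ne_eq]
    omega
  have hpos : ∀ i ∈ ({i | f i ≠ ∅} : Finset _), 1 ≤ #(f i) := fun i hi =>
    card_pos.2 (nonempty_iff_ne_empty.2 (mem_filter.1 hi).2)
  have hsum : ∑ i with f i ≠ ∅, #(f i) = ∑ i, #(f i) :=
    sum_filter_of_ne fun i _ h => fun hi => h (by rw [hi, card_empty])
  rw [prod_ite, prod_const, prod_pow_eq_pow_sum, sum_tsub_distrib _ hpos, hsum,
    ← card_eq_sum_ones, hcompl, rk_univ hc, nullity, rk_eq, card_gaps_sigma, card_sigma]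

lemma tutte_eq_prod_bondTutte (hc : ∀ i, c i ≠ 0) (x y : ℝ) :
    (path N c).tutte x y = ∏ i, bondTutte (c i) x y := by
  simp only [tutte, powerset_univ, bondTutte, Fintype.prod_sum]
  exact (Fintype.sum_equiv sigmaEquivPi _ _ fun f => (tutte_summand_sigma hc x y f).symm).symm

end path

end Multigraph

lemma grigStar_eq_path (n : ℕ) :
    grigStar n = Multigraph.path (2 ^ n) fun i => if Even i.val then 1 else 2 := rfl

lemma tutte_grigStar (n : ℕ) (hn : 1 ≤ n) (x y : ℝ) :
    (grigStar n).tutte x y = x ^ 2 ^ (n - 1) * (y + x) ^ (2 ^ (n - 1) - 1) := by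
  obtain ⟨k, hk⟩ : ∃ k, 2 ^ (n - 1) = k + 1 := Nat.exists_eq_add_one.2 (by positivity)
  have hgaps : 2 ^ n - 1 = 2 * k + 1 := by
    rw [← Nat.sub_add_cancel hn, pow_succ, hk]
    omega
  have hblock (i : Fin (2 ^ n - 1)) :
      bondTutte (if Even i.val then 1 else 2) x y = if Even i.val then x else y + x := by
    split_ifs
    · exact bondTutte_one x y
    · rw [bondTutte_two, add_comm]
  rw [grigStar_eq_path, Multigraph.path.tutte_eq_prod_bondTutte (by intro i; split_ifs <;> simp),
    Fintype.prod_congr _ _ hblock,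
    Fin.prod_univ_eq_prod_range (fun i => if Even i then x else y + x),
    hgaps, prod_range_two_mul_add_one_ite_even, hk, Nat.add_sub_cancel]

section Ising

variable {t : ℝ}

lemma exp_two_mul_sub_one_ne_zero (ht : t ≠ 0) : Real.exp (2 * t) - 1 ≠ 0 := by
  rw [sub_ne_zero, Ne, Real.exp_eq_one_iff]
  exact mul_ne_zero two_ne_zero ht

lemma ising_bridge_factor (ht : t ≠ 0) :
    (Real.exp (2 * t) - 1) * Real.exp (-t) * ((Real.exp (2 * t) + 1) / (Real.exp (2 * t) - 1)) =
      2 * Real.cosh t := by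
  have := exp_two_mul_sub_one_ne_zero ht
  rw [Real.cosh_eq]
  field_simp
  rw [two_mul, Real.exp_add, Real.exp_neg]
  field_simp

lemma ising_doubleEdge_factor (ht : t ≠ 0) :
    (Real.exp (2 * t) - 1) * Real.exp (-(2 * t)) *
        (Real.exp (2 * t) + (Real.exp (2 * t) + 1) / (Real.exp (2 * t) - 1)) =
      2 * Real.cosh t ^ 2 * (1 + Real.tanh t ^ 2) := by
  have hne := exp_two_mul_sub_one_ne_zero ht
  have hsq : Real.exp (2 * t) = Real.exp t ^ 2 := by rw [two_mul, Real.exp_add, sq]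
  rw [hsq] at hne
  rw [Real.exp_neg, hsq, Real.tanh_eq_sinh_div_cosh, Real.cosh_eq, Real.sinh_eq, Real.exp_neg]
  field_simp
  ring

lemma ising_alternating_path (ht : t ≠ 0) (k : ℕ) :
    2 * (Real.exp (2 * t) - 1) ^ (2 * k + 1) * Real.exp (-t * (3 * k + 1)) *
        (((Real.exp (2 * t) + 1) / (Real.exp (2 * t) - 1)) ^ (k + 1) *
          (Real.exp (2 * t) + (Real.exp (2 * t) + 1) / (Real.exp (2 * t) - 1)) ^ k) =
      2 ^ (2 * k + 2) * Real.cosh t ^ (3 * k + 1) * (1 + Real.tanh t ^ 2) ^ k := by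
  have hsplit :
      Real.exp (-t * (3 * k + 1)) = Real.exp (-t) ^ (k + 1) * Real.exp (-(2 * t)) ^ k := by
    rw [← Real.exp_nat_mul, ← Real.exp_nat_mul, ← Real.exp_add]
    congr 1
    push_cast
    ring
  calc _ = 2 * ((Real.exp (2 * t) - 1) * Real.exp (-t) *
          ((Real.exp (2 * t) + 1) / (Real.exp (2 * t) - 1))) ^ (k + 1) *
        ((Real.exp (2 * t) - 1) * Real.exp (-(2 * t)) *
          (Real.exp (2 * t) + (Real.exp (2 * t) + 1) / (Real.exp (2 * t) - 1))) ^ k := by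
        rw [hsplit]
        -- opaque atoms, so that `ring` does not expand sums under the symbolic powers
        generalize (Real.exp (2 * t) + 1) / (Real.exp (2 * t) - 1) = x
        generalize Real.exp (2 * t) - 1 = a
        generalize Real.exp (2 * t) + x = s
        ring
    _ = 2 * (2 * Real.cosh t) ^ (k + 1) * (2 * Real.cosh t ^ 2 * (1 + Real.tanh t ^ 2)) ^ k := by
        rw [ising_bridge_factor ht, ising_doubleEdge_factor ht]
    _ = _ := by
        generalize 1 + Real.tanh t ^ 2 = d
        ring

end Ising

/-- For each `n ≥ 1` and all real `β`, `J` with `βJ ≠ 0`,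
`2(e^{2βJ} - 1)^(2^n - 1) · e^{-βJ(3·2^(n-1) - 2)} ·
  T_n*((e^{2βJ}+1)/(e^{2βJ}-1), e^{2βJ})
  = 2^(2^n) cosh(βJ)^(3·2^(n-1) - 2) (1 + tanh²(βJ))^(2^(n-1) - 1)`,
where `T_n*` is the Tutte polynomial of the loopless Schreier graph `Γ_n*` of the
Grigorchuk group and the right-hand side is the partition function `Z_n` of the
Ising model on `Γ_n*`. -/
theorem ising_grigStar (n : ℕ) (hn : 1 ≤ n) (β J : ℝ) (h : β * J ≠ 0) :
    2 * (Real.exp (2 * β * J) - 1) ^ (2 ^ n - 1) *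
        Real.exp (-(β * J) * (3 * 2 ^ (n - 1) - 2 : ℝ)) *
        (grigStar n).tutte
          ((Real.exp (2 * β * J) + 1) / (Real.exp (2 * β * J) - 1))
          (Real.exp (2 * β * J)) =
      2 ^ (2 ^ n) * Real.cosh (β * J) ^ (3 * 2 ^ (n - 1) - 2) *
        (1 + Real.tanh (β * J) ^ 2) ^ (2 ^ (n - 1) - 1) := by
  obtain ⟨k, hk⟩ : ∃ k, 2 ^ (n - 1) = k + 1 := Nat.exists_eq_add_one.2 (by positivity)
  have hvert : 2 ^ n = 2 * k + 2 := by
    rw [← Nat.sub_add_cancel hn, pow_succ, hk]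
    ring
  have hedges : (3 * 2 ^ (n - 1) - 2 : ℝ) = 3 * k + 1 := by
    have hk' : ((2 ^ (n - 1) : ℕ) : ℝ) = k + 1 := by exact_mod_cast hk
    push_cast at hk'
    rw [hk']
    ring
  rw [mul_assoc 2 β J, tutte_grigStar n hn, hedges, hvert, hk, Nat.add_sub_cancel,
    show 2 * k + 2 - 1 = 2 * k + 1 by omega, show 3 * (k + 1) - 2 = 3 * k + 1 by omega]
  exact ising_alternating_path h k
end
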